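/- If every predefined pattern's elementary formula set is satisfiable, every pattern's transition-formula set {◇ini, ini → ◇fin, ◇fin, □¬(ini ∧ fin)} is satisfiable, any two distinct patterns occurring in a logical expression use disjoint sets of atoms, and the algorithm's output is a finite union of per-pattern formula sets each of which is one of these satisfiable atom-disjoint sets, then the generated logical specification is satisfiable (consistent). -/
import Mathlib


inductive PLTL (α : Type) : Type
  | atom : α → PLTL α
  | neg  : PLTL α → PLTL α
  | conj : PLTL α → PLTL α → PLTL α
  | disj : PLTL α → PLTL α → PLTL α
  | imp  : PLTL α → PLTL α → PLTL α
  | ev   : PLTL α → PLTL α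
  | alw  : PLTL α → PLTL α

def PLTL.Sat {α : Type} (σ : ℕ → α → Bool) : ℕ → PLTL α → Prop
  | i, atom a   => σ i a = true
  | i, neg φ    => ¬ PLTL.Sat σ i φ
  | i, conj φ ψ => PLTL.Sat σ i φ ∧ PLTL.Sat σ i ψ
  | i, disj φ ψ => PLTL.Sat σ i φ ∨ PLTL.Sat σ i ψ
  | i, imp φ ψ  => PLTL.Sat σ i φ → PLTL.Sat σ i ψ
  | i, ev φ     => ∃ j, i ≤ j ∧ PLTL.Sat σ j φ
  | i, alw φ    => ∀ j, i ≤ j → PLTL.Sat σ j φ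

def PLTL.atoms {α : Type} : PLTL α → Set α
  | atom a   => {a}
  | neg φ    => φ.atoms
  | conj φ ψ => φ.atoms ∪ ψ.atoms
  | disj φ ψ => φ.atoms ∪ ψ.atoms
  | imp φ ψ  => φ.atoms ∪ ψ.atoms
  | ev φ     => φ.atoms
  | alw φ    => φ.atoms

def PLTL.Satisfiable {α : Type} (S : Set (PLTL α)) : Prop :=
  ∃ σ : ℕ → α → Bool, ∀ φ ∈ S, PLTL.Sat σ 0 φ

def PLTL.setAtoms {α : Type} (S : Set (PLTL α)) : Set α :=
  ⋃ φ ∈ S, PLTL.atoms φ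

lemma sat_congr {α : Type} (σ σ' : ℕ → α → Bool)
    (φ : PLTL α) (h : ∀ i a, a ∈ φ.atoms → σ i a = σ' i a) :
    ∀ i, PLTL.Sat σ i φ ↔ PLTL.Sat σ' i φ := by
  induction φ with
  | atom a => intro i; simp [PLTL.Sat, h i a (by simp [PLTL.atoms])]
  | neg φ ih =>
      intro i; simp only [PLTL.Sat]
      exact not_congr (ih (fun i a ha => h i a ha) i)
  | conj φ ψ ih1 ih2 =>
      intro i; simp only [PLTL.Sat]
      exact and_congr (ih1 (fun i a ha => h i a (Or.inl ha)) i)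
        (ih2 (fun i a ha => h i a (Or.inr ha)) i)
  | disj φ ψ ih1 ih2 =>
      intro i; simp only [PLTL.Sat]
      exact or_congr (ih1 (fun i a ha => h i a (Or.inl ha)) i)
        (ih2 (fun i a ha => h i a (Or.inr ha)) i)
  | imp φ ψ ih1 ih2 =>
      intro i; simp only [PLTL.Sat]
      exact imp_congr (ih1 (fun i a ha => h i a (Or.inl ha)) i)
        (ih2 (fun i a ha => h i a (Or.inr ha)) i)
  | ev φ ih =>
      intro i; simp only [PLTL.Sat]
      exact exists_congr fun j => and_congr Iff.rfl (ih (fun i a ha => h i a ha) j)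
  | alw φ ih =>
      intro i; simp only [PLTL.Sat]
      exact forall_congr' fun j => imp_congr Iff.rfl (ih (fun i a ha => h i a ha) j)

/-- Theorem 1 of the paper, in abstract form: if the output of Algorithm 2 is a finite
union L = ⋃ₖ Sₖ of per-pattern formula sets, each of which is satisfiable (every
elementary pattern set and every transition-formula set {◇ini, ini → ◇fin, ◇fin,
□¬(ini ∧ fin)} being satisfiable) and which pairwise use disjoint sets of atoms,
then the generated logical specification L is satisfiable (consistent). -/
theorem stmt18 {α : Type} (n : ℕ) (S : Fin n → Set (PLTL α)) (L : Set (PLTL α))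
    (hL : L = ⋃ k, S k)
    (hsat : ∀ k, PLTL.Satisfiable (S k))
    (hdisj : ∀ j k, j ≠ k → Disjoint (PLTL.setAtoms (S j)) (PLTL.setAtoms (S k))) :
    PLTL.Satisfiable L := by
  classical
  choose σ hσ using hsat
  refine ⟨fun i a => if h : ∃ k, a ∈ PLTL.setAtoms (S k) then σ h.choose i a else false, ?_⟩
  intro φ hφ
  rw [hL] at hφ
  obtain ⟨k, hk⟩ := Set.mem_iUnion.mp hφ
  rw [sat_congr _ (σ k) φ ?_ 0]
  · exact hσ k φ hk
  · intro i a ha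
    have hmem : a ∈ PLTL.setAtoms (S k) := Set.mem_biUnion hk ha
    have hex : ∃ j, a ∈ PLTL.setAtoms (S j) := ⟨k, hmem⟩
    rw [dif_pos hex]
    have : hex.choose = k := by
      by_contra hne
      exact (hdisj _ _ hne).ne_of_mem hex.choose_spec hmem rfl
    rw [this]
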